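/- arXiv:1501.06862 — 2 statements merged into one kernel-verified Lean document; each statement's English description precedes it below -/
import Mathlib

section
/- Let C ∈ DH[t] be a monic generic motion polynomial of degree n. Then there exist h₁, …, hₙ ∈ DH such that each linear polynomial t − hᵢ is a rotation polynomial, i.e., hᵢ + h̄ᵢ ∈ ℝ, hᵢh̄ᵢ ∈ ℝ and the primal part of hᵢ is not real, and C = (t − h₁)·(t − h₂)⋯(t − hₙ). -/
open Polynomial
noncomputable section

/-- The dual quaternions: dual numbers over the real quaternions. -/
abbrev DH : Type := DualNumber (Quaternion ℝ)

/-- Dual quaternion conjugation: the conjugate of `p + εq` is `p̄ + εq̄`. -/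
def dconj (h : DH) : DH :=
  TrivSqZeroExt.inl (star (TrivSqZeroExt.fst h)) + TrivSqZeroExt.inr (star (TrivSqZeroExt.snd h))

/-- Coefficientwise conjugation of a dual quaternion polynomial. -/
def pconj (P : Polynomial DH) : Polynomial DH :=
  P.sum fun n a => Polynomial.monomial n (dconj a)

/-- The quaternion unit i. -/
def qi : Quaternion ℝ := ⟨0,1,0,0⟩
/-- The quaternion unit j. -/
def qj : Quaternion ℝ := ⟨0,0,1,0⟩
/-- The quaternion unit k. -/
def qk : Quaternion ℝ := ⟨0,0,0,1⟩

/-- A dual quaternion polynomial is real if all its coefficients are real scalars. -/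
def IsRealPoly (P : Polynomial DH) : Prop :=
  ∃ r : Polynomial ℝ, P = r.map (algebraMap ℝ DH)

/-- The primal part of a dual quaternion polynomial. -/
def primalPart (C : Polynomial DH) : Polynomial (Quaternion ℝ) :=
  C.sum fun n a => Polynomial.monomial n (TrivSqZeroExt.fst a)


/-- A motion polynomial: the leading coefficient is invertible and the norm
polynomial `C·C̄` is real. -/
def IsMotionPoly (C : Polynomial DH) : Prop :=
  IsUnit C.leadingCoeff ∧ IsRealPoly (C * pconj C)

/-- `C = P + εQ` is generic if its primal part `P` has no nonconstant real factor. -/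
def IsGeneric (C : Polynomial DH) : Prop :=
  ¬ ∃ r : Polynomial ℝ, 0 < r.natDegree ∧ r.map (algebraMap ℝ (Quaternion ℝ)) ∣ primalPart C

/-- `t - h` is a rotation polynomial: `h + h̄ ∈ ℝ`, `h·h̄ ∈ ℝ` and the primal part of
`h` is not real. -/
def IsRotationQuat (h : DH) : Prop :=
  (∃ r : ℝ, h + dconj h = algebraMap ℝ DH r) ∧
  (∃ r : ℝ, h * dconj h = algebraMap ℝ DH r) ∧
  ¬ ∃ r : ℝ, TrivSqZeroExt.fst h = algebraMap ℝ (Quaternion ℝ) r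


/-!
The norm polynomial `ν = C C̄` is real and monic of degree `2n`, so it has a monic irreducible
real factor `m`, of degree at most two. Since `m` is central, the remainder `R` of `C` modulo `m`
satisfies `m ∣ R R̄`, and genericity makes the primal part of `R` nonzero. Comparing degrees of
primal parts in the domain `ℍ[t]` forces `deg m = 2` and `R = a (t - h)` with `a` invertible;
then `(t - h)(t - h̄) = m`, so `t - h` is a rotation polynomial and a right factor of `C`. The
cofactor is again a monic generic motion polynomial, and induction on the degree concludes.
-/

open TrivSqZeroExt MulOpposite
open scoped Quaternion

section Conjugation

@[simp] lemma fst_dconj (x : DH) : fst (dconj x) = star (fst x) := by simp [dconj]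

@[simp] lemma snd_dconj (x : DH) : snd (dconj x) = star (snd x) := by simp [dconj]

@[simp] lemma dconj_eq_zero {x : DH} : dconj x = 0 ↔ x = 0 := by
  simp [TrivSqZeroExt.ext_iff]

@[simp] lemma dconj_zero : dconj 0 = 0 := dconj_eq_zero.2 rfl

@[simp] lemma dconj_one : dconj 1 = 1 := by ext <;> simp

@[simp] lemma dconj_algebraMap (r : ℝ) : dconj (algebraMap ℝ DH r) = algebraMap ℝ DH r := by
  ext <;> simp [algebraMap_eq_inl']

lemma dconj_mul (x y : DH) : dconj (x * y) = dconj y * dconj x := by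
  ext <;> simp [star_mul, MulOpposite.smul_eq_mul_unop, add_comm]

def dconjOp : DH →+* DHᵐᵒᵖ where
  toFun x := op (dconj x)
  map_one' := by simp
  map_mul' x y := by simp [dconj_mul]
  map_zero' := by simp
  map_add' x y := by rw [← op_add]; congr 1; ext <;> simp

lemma coeff_pconj (P : DH[X]) (k : ℕ) : (pconj P).coeff k = dconj (P.coeff k) := by
  simp only [pconj, Polynomial.sum_def, finsetSum_coeff, coeff_monomial, Finset.sum_ite_eq']
  split_ifs with h
  · rfl
  · simp [notMem_support_iff.mp h]

lemma op_pconj (P : DH[X]) : op (pconj P) = (opRingEquiv DH).symm (P.map dconjOp) := by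
  apply (opRingEquiv DH).injective
  ext k
  simp [coeff_pconj, dconjOp]

lemma pconj_mul (P Q : DH[X]) : pconj (P * Q) = pconj Q * pconj P :=
  op_injective <| by simp only [op_mul, op_pconj, Polynomial.map_mul, map_mul]

lemma pconj_sub (P Q : DH[X]) : pconj (P - Q) = pconj P - pconj Q :=
  op_injective <| by simp only [op_sub, op_pconj, Polynomial.map_sub, map_sub]

@[simp] lemma pconj_C (a : DH) : pconj (C a) = C (dconj a) := by
  ext k : 1; simp [coeff_pconj, coeff_C, apply_ite dconj]

@[simp] lemma pconj_X : pconj (X : DH[X]) = X := by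
  ext k : 1; simp [coeff_pconj, coeff_X, apply_ite dconj]

lemma pconj_map_algebraMap (r : ℝ[X]) :
    pconj (r.map (algebraMap ℝ DH)) = r.map (algebraMap ℝ DH) := by
  ext k : 1; simp [coeff_pconj]

lemma natDegree_eq_of_coeff_eq_zero_iff {R S : Type*} [Semiring R] [Semiring S] {p : R[X]}
    {q : S[X]} (h : ∀ k, p.coeff k = 0 ↔ q.coeff k = 0) : p.natDegree = q.natDegree :=
  le_antisymm
    (natDegree_le_iff_coeff_eq_zero.2 fun _ hk => (h _).2 (coeff_eq_zero_of_natDegree_lt hk))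
    (natDegree_le_iff_coeff_eq_zero.2 fun _ hk => (h _).1 (coeff_eq_zero_of_natDegree_lt hk))

@[simp] lemma natDegree_pconj (P : DH[X]) : (pconj P).natDegree = P.natDegree :=
  natDegree_eq_of_coeff_eq_zero_iff fun k => by simp [coeff_pconj]

lemma Polynomial.Monic.pconj {P : DH[X]} (hP : P.Monic) : (_root_.pconj P).Monic := by
  rw [Monic.def, Polynomial.leadingCoeff, natDegree_pconj, coeff_pconj, hP.coeff_natDegree,
    dconj_one]

end Conjugation

section PrimalPart

lemma primalPart_eq_map (P : DH[X]) : primalPart P = P.map (fstHom ℝ ℍ ℍ : DH →+* ℍ) := by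
  ext k : 1
  simp only [primalPart, Polynomial.sum_def, finsetSum_coeff, coeff_monomial, Finset.sum_ite_eq',
    coeff_map]
  split_ifs with h
  · rfl
  · simp [notMem_support_iff.mp h]

lemma primalPart_mul (P Q : DH[X]) : primalPart (P * Q) = primalPart P * primalPart Q := by
  simp only [primalPart_eq_map, Polynomial.map_mul]

lemma primalPart_add (P Q : DH[X]) : primalPart (P + Q) = primalPart P + primalPart Q := by
  simp only [primalPart_eq_map, Polynomial.map_add]

lemma primalPart_X_sub_C (h : DH) : primalPart (X - C h) = X - C (fst h) := by
  simp [primalPart_eq_map]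

lemma primalPart_map_algebraMap (r : ℝ[X]) :
    primalPart (r.map (algebraMap ℝ DH)) = r.map (algebraMap ℝ ℍ) := by
  rw [primalPart_eq_map, Polynomial.map_map, AlgHom.comp_algebraMap]

lemma coeff_primalPart_pconj (P : DH[X]) (k : ℕ) :
    (primalPart (pconj P)).coeff k = star ((primalPart P).coeff k) := by
  simp [primalPart_eq_map, coeff_pconj]

end PrimalPart

section Central

variable {A : Type*} [Ring A]

lemma commute_map_algebraMap [Algebra ℝ A] (r : ℝ[X]) (P : A[X]) :
    Commute (r.map (algebraMap ℝ A)) P := by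
  ext k : 1
  rw [coeff_mul, coeff_mul, ← Finset.Nat.sum_antidiagonal_swap]
  refine Finset.sum_congr rfl fun x _ => ?_
  simpa only [Prod.fst_swap, Prod.snd_swap, coeff_map] using Algebra.commutes _ _

lemma dvd_mul_mul_of_forall_commute {k x : A} (hk : ∀ y, Commute k y) (hx : k ∣ x) (a b : A) :
    k ∣ a * x * b := by
  obtain ⟨s, rfl⟩ := hx
  exact ⟨a * s * b, by rw [← (hk a).left_comm, mul_assoc, mul_assoc]⟩

lemma dvd_mul_sub_mul_of_forall_commute {k a b c d : A} (hk : ∀ y, Commute k y)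
    (hab : k ∣ a - b) (hcd : k ∣ c - d) : k ∣ a * c - b * d := by
  have : a * c - b * d = (a - b) * c + b * (c - d) := by noncomm_ring
  rw [this]
  exact dvd_add (hab.mul_right c) (by simpa using dvd_mul_mul_of_forall_commute hk hcd b 1)

end Central

section LinearFactors

lemma X_sub_C_mul_X_sub_C {R : Type*} [Ring R] (x y : R) :
    (X - C x) * (X - C y) = X ^ 2 - C (x + y) * X + C (x * y) := by
  rw [sub_mul, mul_sub, mul_sub, X_mul_C, ← C_mul, C_add, add_mul, sq]
  noncomm_ring

lemma add_dconj_eq_and_mul_dconj_eq {h : DH} {m : ℝ[X]}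
    (hm : (X - C h) * pconj (X - C h) = m.map (algebraMap ℝ DH)) :
    h + dconj h = algebraMap ℝ DH (-m.coeff 1) ∧
      h * dconj h = algebraMap ℝ DH (m.coeff 0) := by
  rw [pconj_sub, pconj_X, pconj_C, X_sub_C_mul_X_sub_C] at hm
  have h1 := congrArg (coeff · 1) hm
  have h0 := congrArg (coeff · 0) hm
  simp only [coeff_add, coeff_sub, coeff_X_pow, coeff_C_mul, coeff_X, coeff_C, coeff_map] at h1 h0
  norm_num at h1 h0
  exact ⟨by rw [map_neg, ← h1]; abel, h0⟩

lemma commute_X_sub_C_pconj {h : DH} {r : ℝ} (hr : h + dconj h = algebraMap ℝ DH r) :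
    Commute (X - C h) (pconj (X - C h)) := by
  have hconj : dconj h = algebraMap ℝ DH r - h := eq_sub_of_add_eq' hr
  rw [pconj_sub, pconj_X, pconj_C, hconj]
  have hC : Commute (C h) (C (algebraMap ℝ DH r - h)) :=
    ((Algebra.commute_algebraMap_left r h).symm.sub_right (Commute.refl h)).map C
  exact ((Commute.refl X).sub_right (commute_X _)).sub_left ((commute_X (C h)).symm.sub_right hC)

end LinearFactors

lemma IsGeneric.of_mul_right {A B : DH[X]} (h : IsGeneric (A * B)) : IsGeneric A :=
  fun ⟨r, hr, hdvd⟩ => h ⟨r, hr, primalPart_mul A B ▸ hdvd.mul_right _⟩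

lemma IsGeneric.fst_not_real_of_mul_X_sub_C {A : DH[X]} {h : DH}
    (hg : IsGeneric (A * (X - C h))) :
    ¬∃ r : ℝ, fst h = algebraMap ℝ ℍ r := by
  rintro ⟨r, hr⟩
  refine hg ⟨X - C r, by rw [natDegree_X_sub_C]; exact one_pos, primalPart A, ?_⟩
  rw [primalPart_mul, primalPart_X_sub_C, hr, ← map_X (algebraMap ℝ _), ← map_C,
    ← Polynomial.map_sub]
  exact (commute_map_algebraMap _ _).symm.eq

lemma mul_pconj_eq_of_mul {A B : DH[X]} {m w : ℝ[X]} (hm : m.Monic)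
    (hB : B * pconj B = m.map (algebraMap ℝ DH))
    (hAB : A * B * pconj (A * B) = (m * w).map (algebraMap ℝ DH)) :
    A * pconj A = w.map (algebraMap ℝ DH) := by
  refine (hm.map (algebraMap ℝ DH)).isRegular.left ?_
  calc m.map (algebraMap ℝ DH) * (A * pconj A)
      = A * (B * pconj B) * pconj A := by
        rw [hB, ← mul_assoc, (commute_map_algebraMap m A).eq]
    _ = (m * w).map (algebraMap ℝ DH) := by rw [← hAB, pconj_mul]; noncomm_ring
    _ = m.map (algebraMap ℝ DH) * w.map (algebraMap ℝ DH) := Polynomial.map_mul _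

lemma natDegree_eq_two_of_map_dvd_mul_star {m : ℝ[X]} (hm : Irreducible m)
    {P Q : Polynomial ℍ} (hP : P ≠ 0) (hQ : ∀ k, Q.coeff k = star (P.coeff k))
    (hlt : P.natDegree < m.natDegree)
    (hdvd : m.map (algebraMap ℝ ℍ) ∣ P * Q) :
    m.natDegree = 2 ∧ P.natDegree = 1 := by
  have hQdeg : Q.natDegree = P.natDegree :=
    natDegree_eq_of_coeff_eq_zero_iff fun k => by rw [hQ, star_eq_zero]
  have hQ0 : Q ≠ 0 := fun h0 => hP <| ext fun k => by simpa [h0] using (hQ k).symm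
  obtain ⟨S, hS⟩ := hdvd
  have hS0 : S ≠ 0 := by rintro rfl; exact mul_ne_zero hP hQ0 (by simpa using hS)
  have hdeg := congrArg natDegree hS
  rw [natDegree_mul hP hQ0, natDegree_mul (hm.ne_zero ∘ (Polynomial.map_eq_zero _).1) hS0,
    natDegree_map, hQdeg] at hdeg
  have := hm.natDegree_le_two
  omega

lemma map_dvd_modByMonic_mul_pconj {m : ℝ[X]} {P : DH[X]}
    (hdvd : m.map (algebraMap ℝ DH) ∣ P * pconj P) :
    m.map (algebraMap ℝ DH) ∣
      (P %ₘ m.map (algebraMap ℝ DH)) * pconj (P %ₘ m.map (algebraMap ℝ DH)) := by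
  set M := m.map (algebraMap ℝ DH)
  set R := P %ₘ M
  have hcentral : ∀ Y, Commute M Y := commute_map_algebraMap m
  have hPR : P - R = M * (P /ₘ M) := (eq_sub_of_add_eq' (modByMonic_add_div P M)).symm
  have hPR' : pconj P - pconj R = M * pconj (P /ₘ M) := by
    rw [← pconj_sub, hPR, pconj_mul, pconj_map_algebraMap, (hcentral _).eq]
  have := dvd_mul_sub_mul_of_forall_commute hcentral ⟨_, hPR⟩ ⟨_, hPR'⟩
  exact (dvd_sub_right hdvd).1 this

lemma primalPart_modByMonic_ne_zero {P : DH[X]} (hgen : IsGeneric P) {m : ℝ[X]}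
    (hpos : 0 < m.natDegree) : primalPart (P %ₘ m.map (algebraMap ℝ DH)) ≠ 0 := by
  intro h0
  refine hgen ⟨m, hpos, primalPart (P /ₘ m.map (algebraMap ℝ DH)), ?_⟩
  conv_lhs => rw [← modByMonic_add_div P (m.map (algebraMap ℝ DH))]
  rw [primalPart_add, primalPart_mul, h0, zero_add, primalPart_map_algebraMap]

lemma eq_C_mul_X_sub_C_of_natDegree_le_one {R : DH[X]} (hR : R.natDegree ≤ 1)
    (ha : fst (R.coeff 1) ≠ 0) :
    R = C (R.coeff 1) * (X - C (-((R.coeff 1)⁻¹ * R.coeff 0))) := by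
  conv_lhs => rw [eq_X_add_C_of_natDegree_le_one hR]
  rw [mul_sub, ← C_mul, mul_neg, ← mul_assoc, TrivSqZeroExt.mul_inv_cancel ha, one_mul, C_neg,
    sub_neg_eq_add]

lemma exists_modByMonic_eq_C_mul_X_sub_C {P : DH[X]} (hgen : IsGeneric P) {m : ℝ[X]}
    (hm : m.Monic) (hirr : Irreducible m) (hdvd : m.map (algebraMap ℝ DH) ∣ P * pconj P) :
    m.natDegree = 2 ∧
      ∃ a h : DH, fst a ≠ 0 ∧ P %ₘ m.map (algebraMap ℝ DH) = C a * (X - C h) := by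
  set R := P %ₘ m.map (algebraMap ℝ DH)
  have hP := primalPart_modByMonic_ne_zero hgen hirr.natDegree_pos
  have hRlt : R.natDegree < m.natDegree := by
    have hne : m.map (algebraMap ℝ DH) ≠ 1 := fun h1 => by
      have := congrArg natDegree h1
      rw [natDegree_map, natDegree_one] at this
      exact hirr.natDegree_pos.ne' this
    simpa using natDegree_modByMonic_lt P (hm.map _) hne
  have hPlt : (primalPart R).natDegree < m.natDegree :=
    (primalPart_eq_map R ▸ natDegree_map_le).trans_lt hRlt
  have hPdvd : m.map (algebraMap ℝ ℍ) ∣ primalPart R * primalPart (pconj R) := by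
    rw [← primalPart_mul, ← primalPart_map_algebraMap, primalPart_eq_map, primalPart_eq_map]
    exact Polynomial.map_dvd _ (map_dvd_modByMonic_mul_pconj hdvd)
  obtain ⟨hm2, hP1⟩ :=
    natDegree_eq_two_of_map_dvd_mul_star hirr hP (coeff_primalPart_pconj R) hPlt hPdvd
  have ha : fst (R.coeff 1) ≠ 0 := by
    have := leadingCoeff_ne_zero.2 hP
    rwa [leadingCoeff, hP1, primalPart_eq_map, coeff_map] at this
  exact ⟨hm2, _, _, ha, eq_C_mul_X_sub_C_of_natDegree_le_one (by omega) ha⟩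

lemma X_sub_C_mul_pconj_eq_of_map_dvd {m : ℝ[X]} (hm : m.Monic) (hm2 : m.natDegree = 2)
    {a h : DH} (ha : fst a ≠ 0)
    (hdvd : m.map (algebraMap ℝ DH) ∣ C a * (X - C h) * pconj (C a * (X - C h))) :
    (X - C h) * pconj (X - C h) = m.map (algebraMap ℝ DH) := by
  have hL : (X - C h) * pconj (X - C h)
      = C a⁻¹ * (C a * (X - C h) * pconj (C a * (X - C h))) * C (dconj a⁻¹) := by
    rw [pconj_mul, pconj_C]
    calc (X - C h) * pconj (X - C h)
        = C (a⁻¹ * a) * (X - C h) * pconj (X - C h) * C (dconj (a⁻¹ * a)) := by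
          rw [TrivSqZeroExt.inv_mul_cancel ha, dconj_one, C_1, one_mul, mul_one]
      _ = _ := by rw [dconj_mul, C_mul, C_mul]; noncomm_ring
  have hmonic : ((X - C h) * pconj (X - C h)).Monic :=
    (monic_X_sub_C h).mul (monic_X_sub_C h).pconj
  refine eq_of_monic_of_dvd_of_natDegree_le (hm.map _) hmonic ?_ ?_
  · rw [hL]
    exact dvd_mul_mul_of_forall_commute (commute_map_algebraMap m) hdvd _ _
  · rw [(monic_X_sub_C h).natDegree_mul (monic_X_sub_C h).pconj, natDegree_pconj,
      natDegree_X_sub_C, natDegree_map, hm2]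

lemma exists_norm_factor_eq_X_sub_C_mul_pconj {P : DH[X]} (hmonic : P.Monic)
    (hpos : 0 < P.natDegree) (hgen : IsGeneric P) {ν : ℝ[X]}
    (hν : P * pconj P = ν.map (algebraMap ℝ DH)) :
    ∃ (m w : ℝ[X]) (h : DH) (Q : DH[X]), m.Monic ∧ ν = m * w ∧
      (X - C h) * pconj (X - C h) = m.map (algebraMap ℝ DH) ∧ P = Q * (X - C h) := by
  have hνpos : 0 < ν.natDegree := by
    rw [← natDegree_map (algebraMap ℝ DH), ← hν, hmonic.natDegree_mul hmonic.pconj]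
    omega
  obtain ⟨m, hm, hirr, w, rfl⟩ :=
    exists_monic_irreducible_factor ν (not_isUnit_of_natDegree_pos ν hνpos)
  set M := m.map (algebraMap ℝ DH)
  have hdvd : M ∣ P * pconj P := ⟨w.map _, by rw [hν, Polynomial.map_mul]⟩
  obtain ⟨hm2, a, h, ha, hR⟩ := exists_modByMonic_eq_C_mul_X_sub_C hgen hm hirr hdvd
  have hL : (X - C h) * pconj (X - C h) = M :=
    X_sub_C_mul_pconj_eq_of_map_dvd hm hm2 ha (hR ▸ map_dvd_modByMonic_mul_pconj hdvd)
  obtain ⟨r, hr⟩ : ∃ r : ℝ, h + dconj h = algebraMap ℝ DH r :=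
    ⟨_, (add_dconj_eq_and_mul_dconj_eq hL).1⟩
  refine ⟨m, w, h, P /ₘ M * pconj (X - C h) + C a, hm, rfl, hL, ?_⟩
  calc P = P /ₘ M * M + C a * (X - C h) := by
        rw [← hR, ← (commute_map_algebraMap m _).eq, add_comm, modByMonic_add_div]
    _ = (P /ₘ M * pconj (X - C h) + C a) * (X - C h) := by
        rw [← hL, (commute_X_sub_C_pconj hr).eq, add_mul, mul_assoc]

lemma exists_rotation_right_factor {P : DH[X]} (hmonic : P.Monic) (hpos : 0 < P.natDegree)
    (hmotion : IsMotionPoly P) (hgen : IsGeneric P) :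
    ∃ (Q : DH[X]) (h : DH), IsRotationQuat h ∧ P = Q * (X - C h) ∧ Q.Monic ∧
      IsMotionPoly Q ∧ IsGeneric Q := by
  obtain ⟨-, ν, hν⟩ := hmotion
  obtain ⟨m, w, h, Q, hm, rfl, hL, rfl⟩ :=
    exists_norm_factor_eq_X_sub_C_mul_pconj hmonic hpos hgen hν
  obtain ⟨hsum, hprod⟩ := add_dconj_eq_and_mul_dconj_eq hL
  have hQ : Q.Monic := (monic_X_sub_C h).of_mul_monic_right hmonic
  exact ⟨Q, h, ⟨⟨_, hsum⟩, ⟨_, hprod⟩, hgen.fst_not_real_of_mul_X_sub_C⟩, rfl, hQ,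
    ⟨hQ.leadingCoeff ▸ isUnit_one, w, mul_pconj_eq_of_mul hm hL hν⟩, hgen.of_mul_right⟩

/-- A monic generic motion polynomial of degree `n` factors into `n` linear rotation
polynomials `(t - h₁)⋯(t - hₙ)`. -/
theorem generic_motion_polynomial_factorization (n : ℕ) (C : Polynomial DH)
    (hmonic : C.Monic) (hdeg : C.natDegree = n)
    (hmotion : IsMotionPoly C) (hgen : IsGeneric C) :
    ∃ h : Fin n → DH, (∀ i, IsRotationQuat (h i)) ∧
      C = (List.ofFn fun i => X - Polynomial.C (h i)).prod := by
  induction n generalizing C with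
  | zero =>
    exact ⟨Fin.elim0, fun i => i.elim0, by simp [hmonic.natDegree_eq_zero.mp hdeg]⟩
  | succ n ih =>
    obtain ⟨Q, h, hrot, rfl, hQ, hQmotion, hQgen⟩ :=
      exists_rotation_right_factor hmonic (by omega) hmotion hgen
    have hQdeg : Q.natDegree = n := by
      rw [hQ.natDegree_mul (monic_X_sub_C h), natDegree_X_sub_C] at hdeg
      omega
    obtain ⟨hs, hrots, rfl⟩ := ih Q hQ hQdeg hQmotion hQgen
    refine ⟨Fin.snoc hs h, Fin.lastCases (by simpa using hrot) (by simpa using hrots), ?_⟩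
    rw [List.ofFn_succ', List.prod_concat]
    simp only [Fin.snoc_castSucc, Fin.snoc_last]
end
end

section
/- Every monic polynomial P ∈ ℍ[t] of degree n over the real quaternions factors into monic linear factors: there exist q₁, …, qₙ ∈ ℍ with P = (t − q₁)·(t − q₂)⋯(t − qₙ). (In particular, factorization into linear factors always works for purely spherical rational motions, i.e., motion polynomials with coefficients in ℍ.) -/
/-!
Conjugating coefficients turns `P` into `P̄` with `P̄ * P` real, so `P̄ * P` has a root `x` in
`ℂ ⊂ ℍ`. Evaluation (`t` substituted on the right of the coefficients) is not multiplicative,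
but `(F * G)(x) = F(f x f⁻¹) * f` whenever `f = G(x) ≠ 0`. Hence either `P(x) = 0`, giving a right
factor `t - x` of `P`, or `P̄` vanishes at `f x f⁻¹`, and conjugating back gives a left linear
factor of `P`. Induction on the degree finishes.
-/

open Polynomial

namespace Polynomial

section Ring

variable {R : Type*} [Ring R]

theorem exists_eq_mul_X_sub_C_add_C_eval (p : R[X]) (a : R) :
    ∃ q : R[X], p = q * (X - C a) + C (p.eval a) := by
  induction p using Polynomial.induction_on' with
  | add p r hp hr =>
    obtain ⟨q, hq⟩ := hp
    obtain ⟨s, hs⟩ := hr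
    refine ⟨q + s, ?_⟩
    rw [eval_add, C_add, add_mul]
    nth_rw 1 [hq, hs]
    abel
  | monomial n b =>
    refine ⟨C b * ∑ i ∈ Finset.range n, X ^ i * C a ^ (n - 1 - i), ?_⟩
    rw [mul_assoc, (commute_X (C a)).geom_sum₂_mul, eval_monomial, ← C_mul_X_pow_eq_monomial,
      C_mul, C_pow, mul_sub, sub_add_cancel]

theorem exists_eq_mul_X_sub_C_of_eval_eq_zero {p : R[X]} {a : R} (h : p.eval a = 0) :
    ∃ q : R[X], p = q * (X - C a) := by
  simpa [h] using exists_eq_mul_X_sub_C_add_C_eval p a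

theorem eval_mul_eq_sum (p q : R[X]) (x : R) :
    (p * q).eval x = p.sum fun n a => a * q.eval x * x ^ n := by
  induction p using Polynomial.induction_on' with
  | add p r hp hr =>
    rw [add_mul, eval_add, hp, hr, sum_add_index _ _ _ (by simp) (by intros; rw [add_mul, add_mul])]
  | monomial n a =>
    rw [sum_monomial_index _ _ (by simp), ← C_mul_X_pow_eq_monomial, mul_assoc, X_pow_mul,
      eval_C_mul, eval_mul_X_pow, mul_assoc]

theorem Monic.exists_eq_prod_X_sub_C [Nontrivial R]
    (h : ∀ p : R[X], 0 < p.natDegree → ∃ a q, p = (X - C a) * q ∨ p = q * (X - C a))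
    {n : ℕ} {p : R[X]} (hp : p.Monic) (hdeg : p.natDegree = n) :
    ∃ r : Fin n → R, p = (List.ofFn fun i => X - C (r i)).prod := by
  induction n generalizing p with
  | zero => exact ⟨Fin.elim0, by simp [hp.natDegree_eq_zero.mp hdeg]⟩
  | succ n ih =>
    obtain ⟨a, q, hq | hq⟩ := h p (by omega)
    · have hqm : q.Monic := (monic_X_sub_C a).of_mul_monic_left (hq ▸ hp)
      rw [hq, (monic_X_sub_C a).natDegree_mul hqm, natDegree_X_sub_C] at hdeg
      obtain ⟨r, hr⟩ := ih hqm (by omega)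
      exact ⟨Fin.cons a r, by simp [List.ofFn_succ, hq, hr]⟩
    · have hqm : q.Monic := (monic_X_sub_C a).of_mul_monic_right (hq ▸ hp)
      rw [hq, hqm.natDegree_mul (monic_X_sub_C a), natDegree_X_sub_C] at hdeg
      obtain ⟨r, hr⟩ := ih hqm (by omega)
      refine ⟨Fin.snoc r a, ?_⟩
      rw [List.ofFn_succ', List.prod_concat]
      simp only [Fin.snoc_castSucc, Fin.snoc_last, hq, hr]

end Ring

theorem eval_mul_of_eval_ne_zero {D : Type*} [DivisionRing D] (p q : D[X]) {x : D}
    (h : q.eval x ≠ 0) :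
    (p * q).eval x = p.eval (q.eval x * x * (q.eval x)⁻¹) * q.eval x := by
  rw [eval_mul_eq_sum, eval_eq_sum (p := p), Polynomial.sum, Polynomial.sum, Finset.sum_mul]
  refine Finset.sum_congr rfl fun n _ => ?_
  have hconj : (q.eval x * x * (q.eval x)⁻¹) ^ n = q.eval x * x ^ n * (q.eval x)⁻¹ := by
    simpa using GroupWithZero.conj_pow₀ (inv_ne_zero h) (d := x) (s := n)
  rw [hconj, mul_assoc, mul_assoc, mul_assoc, inv_mul_cancel₀ h, mul_one]

section StarRing

variable {R : Type*} [Semiring R] [StarRing R]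

noncomputable instance : Star R[X] where
  star p := MulOpposite.unop <| (opRingEquiv R).symm <| p.map (starRingEquiv (R := R))

@[simp]
theorem coeff_star (p : R[X]) (n : ℕ) : (star p).coeff n = star (p.coeff n) := by
  apply MulOpposite.op_injective
  change MulOpposite.op ((MulOpposite.unop ((opRingEquiv R).symm _)).coeff n) = _
  rw [← coeff_opRingEquiv, RingEquiv.apply_symm_apply, coeff_map]
  rfl

noncomputable instance : StarRing R[X] where
  star_involutive p := by ext; simp
  star_mul p q := by
    ext n
    rw [coeff_star, coeff_mul, coeff_mul, star_sum, ← Finset.Nat.sum_antidiagonal_swap]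
    simp
  star_add p q := by ext; simp

@[simp]
theorem star_X : star (X : R[X]) = X := by ext; simp [coeff_X, apply_ite star]

@[simp]
theorem star_C (a : R) : star (C a) = C (star a) := by ext; simp [coeff_C, apply_ite star]

@[simp]
theorem support_star (p : R[X]) : (star p).support = p.support := by ext; simp

@[simp]
theorem natDegree_star (p : R[X]) : (star p).natDegree = p.natDegree := by
  simp only [natDegree, degree, support_star]

end StarRing

end Polynomial

namespace Quaternion

theorem exists_aeval_eq_zero (p : ℝ[X]) (hp : 0 < p.degree) :
    ∃ x : Quaternion ℝ, aeval x p = 0 := by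
  obtain ⟨z, hz⟩ := Complex.exists_root (f := p.map (algebraMap ℝ ℂ))
    (by rwa [degree_map_eq_of_injective (algebraMap ℝ ℂ).injective])
  have hi : (⟨0, 1, 0, 0⟩ : Quaternion ℝ) * ⟨0, 1, 0, 0⟩ = -1 := by ext <;> simp
  let ι : ℂ →ₐ[ℝ] Quaternion ℝ := Complex.liftAux _ hi
  refine ⟨ι z, ?_⟩
  rw [aeval_algHom_apply, ← eval_map_algebraMap, hz, map_zero]

theorem mem_lifts_of_star_eq_self {p : (Quaternion ℝ)[X]} (hp : star p = p) :
    p ∈ lifts (algebraMap ℝ (Quaternion ℝ)) := by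
  refine lifts_iff_coeff_lifts _ |>.mpr fun n => ⟨(p.coeff n).re, ?_⟩
  rw [algebraMap_def]
  exact (star_eq_self.mp (by rw [← coeff_star, hp])).symm

theorem exists_eq_X_sub_C_mul_or_eq_mul_X_sub_C {p : (Quaternion ℝ)[X]} (hp : 0 < p.natDegree) :
    ∃ a q, p = (X - C a) * q ∨ p = q * (X - C a) := by
  have hp0 : p ≠ 0 := ne_zero_of_natDegree_gt hp
  obtain ⟨N, hN⟩ := mem_lifts_of_star_eq_self (p := star p * p) (by simp [star_mul])
  have hNdeg : 0 < N.degree := by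
    rw [← natDegree_pos_iff_degree_pos, ← natDegree_map_eq_of_injective
      (algebraMap ℝ (Quaternion ℝ)).injective, ← coe_mapRingHom, hN,
      natDegree_mul (star_ne_zero.mpr hp0) hp0]
    omega
  obtain ⟨x, hx⟩ := exists_aeval_eq_zero N hNdeg
  rw [← eval_map_algebraMap, ← coe_mapRingHom, hN] at hx
  by_cases h : p.eval x = 0
  · obtain ⟨q, hq⟩ := exists_eq_mul_X_sub_C_of_eval_eq_zero h
    exact ⟨x, q, .inr hq⟩
  · rw [eval_mul_of_eval_ne_zero _ _ h, mul_eq_zero, or_iff_left h] at hx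
    set w := p.eval x * x * (p.eval x)⁻¹
    obtain ⟨q, hq⟩ := exists_eq_mul_X_sub_C_of_eval_eq_zero hx
    refine ⟨star w, star q, .inl ?_⟩
    rw [← star_star p, hq, star_mul, star_sub, star_X, star_C]

end Quaternion

/-- Every monic polynomial of degree `n` over the real quaternions factors into
monic linear factors `(t − q₁)(t − q₂)⋯(t − qₙ)`. -/
theorem quaternion_polynomial_factorization (n : ℕ) (P : Polynomial (Quaternion ℝ))
    (hP : P.Monic) (hdeg : P.natDegree = n) :
    ∃ q : Fin n → Quaternion ℝ,
      P = (List.ofFn fun i => X - Polynomial.C (q i)).prod :=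
  hP.exists_eq_prod_X_sub_C (fun _ => Quaternion.exists_eq_X_sub_C_mul_or_eq_mul_X_sub_C) hdeg
end
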